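/- Let p ≥ 5 be a prime with p ≡ 2 (mod 3), and define β(n) = Σ_{d|n} χ₃(n/d)d⁴. Write m = p^a·m₀ with p ∤ m₀ and suppose β(m₀) ≢ 0 (mod p). Then the integer c(mp) − c(m), where c(n) = 3·Σ_{d|n}χ₃(d)d⁴ − 27β(n), is not divisible by p (i.e. its p-adic valuation is 0). -/
import Mathlib


/-- The nontrivial Dirichlet character mod 3, as a function on ℕ with values in ℤ. -/
def chi3 (n : ℕ) : ℤ := if n % 3 = 1 then 1 else if n % 3 = 2 then -1 else 0

/-- `β(n) = Σ_{d ∣ n} χ₃(n/d) d⁴`. -/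
def betaFun (n : ℕ) : ℤ := ∑ d ∈ n.divisors, chi3 (n / d) * (d : ℤ) ^ 4

/-- `c(n) = 3 Σ_{d ∣ n} χ₃(d) d⁴ − 27 β(n)`. -/
def cMix (n : ℕ) : ℤ :=
  3 * (∑ d ∈ n.divisors, chi3 d * (d : ℤ) ^ 4) - 27 * betaFun n

lemma chi3_mul (a b : ℕ) : chi3 (a * b) = chi3 a * chi3 b := by
  unfold chi3
  have ha : a % 3 < 3 := Nat.mod_lt _ (by norm_num)
  have hb : b % 3 < 3 := Nat.mod_lt _ (by norm_num)
  rw [Nat.mul_mod]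
  interval_cases h : a % 3 <;> interval_cases h2 : b % 3 <;> norm_num

lemma chi3_pow (q k : ℕ) : chi3 (q ^ k) = chi3 q ^ k := by
  induction k with
  | zero => simp [chi3]
  | succ n ih => rw [pow_succ, pow_succ, chi3_mul, ih]

lemma sum_div_reduce (p : ℕ) (hp : p.Prime) (k m₀ : ℕ) (hm₀ : ¬ p ∣ m₀)
    (f : ℕ → ZMod p) (hf : ∀ d, p ∣ d → f d = 0) :
    ∑ d ∈ (p ^ k * m₀).divisors, f d = ∑ d ∈ m₀.divisors, f d := by
  have hm₀0 : m₀ ≠ 0 := fun h => hm₀ (h ▸ dvd_zero p)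
  symm
  apply Finset.sum_subset
  · intro d hd
    rw [Nat.mem_divisors] at *
    exact ⟨hd.1.mul_left _, mul_ne_zero (pow_ne_zero _ hp.pos.ne') hm₀0⟩
  · intro d hd hnd
    apply hf
    by_contra hpd
    rw [Nat.mem_divisors] at hd hnd
    have hcop : Nat.Coprime d (p ^ k) :=
      Nat.Coprime.pow_right k ((hp.coprime_iff_not_dvd.mpr hpd).symm)
    exact hnd ⟨hcop.dvd_of_dvd_mul_left hd.1, hm₀0⟩

theorem stmt2 (p : ℕ) (hp : p.Prime) (hp5 : 5 ≤ p) (hinert : p % 3 = 2)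
    (a m₀ m : ℕ) (hm₀ : ¬ p ∣ m₀) (hm : m = p ^ a * m₀)
    (hβ : ¬ (p : ℤ) ∣ betaFun m₀) :
    ¬ (p : ℤ) ∣ cMix (m * p) - cMix m := by
  haveI : Fact p.Prime := ⟨hp⟩
  have hm₀0 : m₀ ≠ 0 := fun h => hm₀ (h ▸ dvd_zero p)
  have chiP : chi3 p = -1 := by unfold chi3; rw [hinert]; norm_num
  -- cast vanishing helper
  have hvan : ∀ (g : ℕ → ZMod p) d, p ∣ d → g d * (d : ZMod p) ^ 4 = 0 := by
    intro g d hd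
    have : (d : ZMod p) = 0 := (ZMod.natCast_eq_zero_iff d p).mpr hd
    rw [this]; ring
  -- A-part reduction
  have hA : ∀ k, ((∑ d ∈ (p ^ k * m₀).divisors, chi3 d * (d : ℤ) ^ 4 : ℤ) : ZMod p)
      = ((∑ d ∈ m₀.divisors, chi3 d * (d : ℤ) ^ 4 : ℤ) : ZMod p) := by
    intro k
    push_cast
    exact sum_div_reduce p hp k m₀ hm₀ (fun d => ((chi3 d : ZMod p) * (d : ZMod p) ^ 4))
      (fun d hd => by simpa using hvan (fun n => ((chi3 n : ℤ) : ZMod p)) d hd)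
  -- β-part reduction
  have hB : ∀ k, ((betaFun (p ^ k * m₀) : ℤ) : ZMod p)
      = (-1 : ZMod p) ^ k * ((betaFun m₀ : ℤ) : ZMod p) := by
    intro k
    unfold betaFun
    push_cast
    rw [sum_div_reduce p hp k m₀ hm₀
      (fun d => ((chi3 (p ^ k * m₀ / d) : ZMod p) * (d : ZMod p) ^ 4))
      (fun d hd => by
        simpa using hvan (fun n => ((chi3 (p ^ k * m₀ / n) : ℤ) : ZMod p)) d hd),
      Finset.mul_sum]
    apply Finset.sum_congr rfl
    intro d hd
    rw [Nat.mem_divisors] at hd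
    rw [Nat.mul_div_assoc _ hd.1, chi3_mul, chi3_pow, chiP]
    push_cast
    ring
  intro hdvd
  rw [← ZMod.intCast_zmod_eq_zero_iff_dvd] at hdvd
  have h1 : m * p = p ^ (a + 1) * m₀ := by subst hm; ring
  rw [h1, hm] at hdvd
  unfold cMix at hdvd
  push_cast at hdvd
  have e1 := hA (a + 1)
  have e2 := hA a
  push_cast at e1 e2
  rw [e1, e2, hB (a + 1), hB a] at hdvd
  have key : (54 : ZMod p) * (-1 : ZMod p) ^ a * ((betaFun m₀ : ℤ) : ZMod p) = 0 := by
    linear_combination hdvd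
  have h54 : (54 : ZMod p) ≠ 0 := by
    intro h
    have : (p : ℤ) ∣ 54 := by
      have := (ZMod.natCast_eq_zero_iff 54 p).mp (by exact_mod_cast h)
      exact_mod_cast this
    have hpn : p ∣ 54 := by exact_mod_cast this
    have : p ∣ 2 * 27 := by norm_num at hpn ⊢; exact hpn
    rcases (Nat.Prime.dvd_mul hp).mp this with h2 | h27
    · have := Nat.le_of_dvd (by norm_num) h2; omega
    · have : p ∣ 3 ^ 3 := by norm_num at h27 ⊢; exact h27
      have := Nat.le_of_dvd (by norm_num) (hp.dvd_of_dvd_pow this)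
      omega
  have hneg : ((-1 : ZMod p)) ^ a ≠ 0 := pow_ne_zero _ (by
    simp only [ne_eq, neg_eq_zero]; exact one_ne_zero)
  rcases mul_eq_zero.mp key with h | h
  · rcases mul_eq_zero.mp h with h | h
    · exact h54 h
    · exact hneg h
  · exact hβ ((ZMod.intCast_zmod_eq_zero_iff_dvd _ p).mp h)
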